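/- arXiv:math/9706227 — 6 statements merged into one kernel-verified Lean document; each statement's English description precedes it below -/
import Mathlib

section
/- Let A and B be commutative rings, let φ : A → B be a flat ring homomorphism, let 𝔭 be a prime ideal of A whose extension satisfies 𝔭B ≠ B, and let 𝔞 be an ideal of A such that 𝔞ⁿB ⊆ 𝔭B for some natural number n ≥ 1 (where 𝔞ⁿB is the extension of the n-th power of 𝔞). Then 𝔞 ⊆ 𝔭. -/
open scoped TensorProduct

/-- Key lemma: for a flat ring map, if `c ∉ 𝔭` (𝔭 prime) and `φ c ∈ 𝔭B`, then `𝔭B = ⊤`. -/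
theorem flat_aux {A B : Type*} [CommRing A] [CommRing B]
    (φ : A →+* B) (hflat : letI := φ.toModule; Module.Flat A B)
    (𝔭 : Ideal A) (h𝔭 : 𝔭.IsPrime) (hne : Ideal.map φ 𝔭 ≠ ⊤)
    {c : A} (hc : c ∉ 𝔭) : φ c ∉ Ideal.map φ 𝔭 := by
  letI := φ.toAlgebra
  haveI : Module.Flat A B := hflat
  intro hmem
  -- c is regular on A ⧸ 𝔭
  have hreg : IsSMulRegular (A ⧸ 𝔭) c := by
    intro x y hxy
    obtain ⟨x, rfl⟩ := Ideal.Quotient.mk_surjective x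
    obtain ⟨y, rfl⟩ := Ideal.Quotient.mk_surjective y
    have h' : (Ideal.Quotient.mk 𝔭) (c * x) = (Ideal.Quotient.mk 𝔭) (c * y) := hxy
    rw [Ideal.Quotient.eq] at h' ⊢
    have hcxy : c * (x - y) ∈ 𝔭 := by rw [mul_sub]; exact h'
    rcases h𝔭.mem_or_mem hcxy with h'' | h''
    · exact absurd h'' hc
    · exact h''
  -- hence c is regular on B ⊗[A] (A ⧸ 𝔭), hence on B ⧸ 𝔭B
  have hreg2 : IsSMulRegular (B ⊗[A] (A ⧸ 𝔭)) c := hreg.lTensor B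
  have hreg3 : IsSMulRegular (B ⧸ (𝔭 • (⊤ : Submodule A B))) c :=
    (TensorProduct.tensorQuotEquivQuotSMul B 𝔭).isSMulRegular_congr c |>.mp hreg2
  have htop : (𝔭 • (⊤ : Submodule A B)) = (Ideal.map φ 𝔭).restrictScalars A :=
    Ideal.smul_top_eq_map 𝔭
  have h1 : c • (Submodule.Quotient.mk (1 : B) : B ⧸ (𝔭 • (⊤ : Submodule A B))) = 0 := by
    rw [← Submodule.Quotient.mk_smul, Submodule.Quotient.mk_eq_zero, htop]
    simpa [Algebra.smul_def, RingHom.algebraMap_toAlgebra] using hmem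
  have h2 : (Submodule.Quotient.mk (1 : B) : B ⧸ (𝔭 • (⊤ : Submodule A B))) = 0 :=
    hreg3 (by show c • _ = c • _; rw [smul_zero]; exact h1)
  rw [Submodule.Quotient.mk_eq_zero, htop] at h2
  exact hne ((Ideal.eq_top_iff_one _).mpr h2)

/-- Let `A`, `B` be commutative rings, `φ : A → B` a flat ring homomorphism, `𝔭` a prime ideal
of `A` with `𝔭B ≠ B`, and `𝔞` an ideal of `A` with `𝔞ⁿB ⊆ 𝔭B` for some `n ≥ 1`.
Then `𝔞 ⊆ 𝔭`. -/
theorem flat_pow_extension_le_prime {A B : Type*} [CommRing A] [CommRing B]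
    (φ : A →+* B) (hflat : letI := φ.toModule; Module.Flat A B)
    (𝔭 : Ideal A) (h𝔭 : 𝔭.IsPrime) (hne : Ideal.map φ 𝔭 ≠ ⊤)
    (𝔞 : Ideal A) (n : ℕ) (hn : 1 ≤ n)
    (h : Ideal.map φ (𝔞 ^ n) ≤ Ideal.map φ 𝔭) :
    𝔞 ≤ 𝔭 := by
  intro a ha
  by_contra ha𝔭
  have han : a ^ n ∉ 𝔭 := fun hmem => ha𝔭 (h𝔭.mem_of_pow_mem n hmem)
  have : φ (a ^ n) ∈ Ideal.map φ 𝔭 :=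
    h (Ideal.mem_map_of_mem φ (Ideal.pow_mem_pow ha n))
  exact flat_aux φ hflat 𝔭 h𝔭 hne han this
end

section
/- Let A and C be integral domains which are unique factorization domains, and let φ : A → C be a flat ring homomorphism (C is flat as an A-module via φ). If f, g ∈ A are relatively prime, i.e. every common divisor of f and g in A is a unit, then φ(f) and φ(g) are relatively prime in C, i.e. every common divisor of φ(f) and φ(g) in C is a unit. -/
/-!
In a UFD, `f ≠ 0` and `g` are relatively prime exactly when `[f, g]` is a weakly regular
sequence, i.e. `f` is a nonzerodivisor and `g` is a nonzerodivisor modulo `f`. Weak regularity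
is preserved by flat base change, and conversely a weakly regular pair `[a, b]` in any
commutative ring is relatively prime: if `a = d x` and `b = d y`, then `b x = y a`, so `a ∣ x`,
say `x = a c`, and cancelling `a` from `a = a (d c)` gives `d c = 1`.
-/

open RingTheory.Sequence
open scoped Pointwise

theorem Submodule.mem_smul_top_self_iff_dvd {R : Type*} [CommRing R] (r x : R) :
    x ∈ r • (⊤ : Submodule R R) ↔ r ∣ x := by
  simp [Submodule.mem_smul_pointwise_iff_exists, dvd_def, eq_comm]

theorem isSMulRegular_quotSMulTop_iff_dvd {R : Type*} [CommRing R] (r s : R) :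
    IsSMulRegular (QuotSMulTop r R) s ↔ ∀ x, r ∣ s * x → r ∣ x := by
  simp only [QuotSMulTop, isSMulRegular_quotient_iff_mem_of_smul_mem,
    Submodule.mem_smul_top_self_iff_dvd, smul_eq_mul]

theorem IsRelPrime.isWeaklyRegular_pair {R : Type*} [CommRing R] [DecompositionMonoid R]
    {r s : R} (hr : IsSMulRegular R r) (hrs : IsRelPrime r s) :
    IsWeaklyRegular R [r, s] := by
  rw [isWeaklyRegular_cons_iff, isWeaklyRegular_singleton_iff]
  exact ⟨hr, (isSMulRegular_quotSMulTop_iff_dvd r s).2 fun _ ↦ hrs.dvd_of_dvd_mul_left⟩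

theorem RingTheory.Sequence.IsWeaklyRegular.isRelPrime_of_pair {R : Type*} [CommRing R]
    {r s : R} (h : IsWeaklyRegular R [r, s]) : IsRelPrime r s := by
  rw [isWeaklyRegular_cons_iff, isWeaklyRegular_singleton_iff] at h
  obtain ⟨hr, hs⟩ := h
  rintro d ⟨x, rfl⟩ ⟨y, rfl⟩
  obtain ⟨c, hc⟩ : d * x ∣ x := (isSMulRegular_quotSMulTop_iff_dvd _ _).1 hs x ⟨y, by ring⟩
  refine .of_mul_eq_one c (hr ?_)
  simp only [smul_eq_mul]
  linear_combination -d * hc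

theorem flat_map_relatively_prime_general {A C : Type*}
    [CommRing A] [IsDomain A] [UniqueFactorizationMonoid A]
    [CommRing C]
    (φ : A →+* C) (hflat : letI := φ.toModule; Module.Flat A C)
    (f g : A) (hfg : ∀ d : A, d ∣ f → d ∣ g → IsUnit d) :
    ∀ d : C, d ∣ φ f → d ∣ φ g → IsUnit d := by
  let := φ.toAlgebra
  obtain rfl | hf := eq_or_ne f 0
  · exact fun d _ hd ↦ isUnit_of_dvd_unit hd ((hfg g (dvd_zero g) dvd_rfl).map φ)
  have hreg : IsWeaklyRegular A [f, g] :=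
    IsRelPrime.isWeaklyRegular_pair (.of_ne_zero hf) fun d ↦ hfg d
  exact fun d ↦ hreg.of_flat.isRelPrime_of_pair (d := d)

/-- Let `A` and `C` be unique factorization domains and `φ : A → C` a flat ring homomorphism.
If `f, g ∈ A` are relatively prime (every common divisor is a unit), then `φ f` and `φ g`
are relatively prime in `C`. -/
theorem flat_map_relatively_prime {A C : Type*}
    [CommRing A] [IsDomain A] [UniqueFactorizationMonoid A]
    [CommRing C] [IsDomain C] [UniqueFactorizationMonoid C]
    (φ : A →+* C) (hflat : letI := φ.toModule; Module.Flat A C)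
    (f g : A) (hfg : ∀ d : A, d ∣ f → d ∣ g → IsUnit d) :
    ∀ d : C, d ∣ φ f → d ∣ φ g → IsUnit d :=
  flat_map_relatively_prime_general φ hflat f g hfg
end

section
/- Let K be a normed field, let n ≥ 1 and k ≥ 0, let R = {c ∈ K : ‖c‖ ≤ 1}, let P = R^n × R^k ⊆ K^n × K^k with the sup norm, and define θ : K^n × K^k → K^n × K^k by θ(x,t) = (x₁, x₁x₂, …, x₁xₙ, t). Then θ is injective on the set {(x,t) ∈ P : x₁ ≠ 0}, and for every subset B ⊆ {(x,t) ∈ P : x₁ ≠ 0} that is open in K^n × K^k, the image θ(B) is open in the subspace topology of θ(P). -/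
/-- The closed unit polydisc `R^(n+1) × R^k` in `K^(n+1) × K^k`. -/
def polydisc (K : Type*) [NormedField K] (n k : ℕ) :
    Set ((Fin (n + 1) → K) × (Fin k → K)) :=
  {p | (∀ i, ‖p.1 i‖ ≤ 1) ∧ (∀ j, ‖p.2 j‖ ≤ 1)}

/-- The standard chart `θ(x, t) = (x₁, x₁x₂, …, x₁xₙ, t)` of the blowing up of
`K^(n+1) × K^k` with centre `{0} × K^k`. -/
def blowChart (K : Type*) [NormedField K] (n k : ℕ) :
    ((Fin (n + 1) → K) × (Fin k → K)) → ((Fin (n + 1) → K) × (Fin k → K)) :=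
  fun p => (fun i => if i = 0 then p.1 0 else p.1 0 * p.1 i, p.2)

/-- `θ` is injective on `{(x, t) ∈ R^(n+1) × R^k : x₁ ≠ 0}`, and for every open subset `B`
of `K^(n+1) × K^k` contained in that set, the image `θ(B)` is open in the subspace topology
of `θ(R^(n+1) × R^k)`. -/
theorem blowChart_injOn_and_open {K : Type*} [NormedField K] (n k : ℕ) :
    Set.InjOn (blowChart K n k) {p ∈ polydisc K n k | p.1 0 ≠ 0} ∧
    ∀ B ⊆ {p ∈ polydisc K n k | p.1 0 ≠ 0}, IsOpen B →
      IsOpen {y : ↥(blowChart K n k '' polydisc K n k) | ↑y ∈ blowChart K n k '' B} := by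
  constructor
  · rintro ⟨x, t⟩ ⟨-, hx0⟩ ⟨y, s⟩ ⟨-, hy0⟩ h
    simp only [blowChart, Prod.mk.injEq] at h
    obtain ⟨h1, h2⟩ := h
    have h0 : x 0 = y 0 := by simpa using congrFun h1 0
    have hx : x = y := by
      funext i
      by_cases hi : i = 0
      · rw [hi]; exact h0
      · have hmul := congrFun h1 i
        simp only [hi, if_false] at hmul
        rw [h0] at hmul
        exact mul_left_cancel₀ (h0 ▸ hx0) hmul
    exact Prod.ext hx h2
  · intro B hB hBopen
    set ψ : ((Fin (n + 1) → K) × (Fin k → K)) → ((Fin (n + 1) → K) × (Fin k → K)) :=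
      fun y => ((fun i => if i = 0 then y.1 0 else y.1 i / y.1 0), y.2) with hψdef
    have hc0 : Continuous fun y : (Fin (n + 1) → K) × (Fin k → K) => y.1 0 :=
      (continuous_apply 0).comp continuous_fst
    have hU : IsOpen {y : (Fin (n + 1) → K) × (Fin k → K) | y.1 0 ≠ 0} :=
      isOpen_compl_singleton.preimage hc0
    have hψ : ContinuousOn ψ {y | y.1 0 ≠ 0} := by
      apply ContinuousOn.prodMk
      · apply continuousOn_pi.2
        intro i
        by_cases hi : i = 0
        · subst hi
          simpa using hc0.continuousOn
        · simp only [hψdef, hi, if_false]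
          exact ContinuousOn.div (((continuous_apply i).comp continuous_fst).continuousOn)
            hc0.continuousOn (fun y hy => hy)
      · exact continuous_snd.continuousOn
    have key : blowChart K n k '' B = {y | y.1 0 ≠ 0} ∩ ψ ⁻¹' B := by
      ext y
      constructor
      · rintro ⟨p, hp, rfl⟩
        obtain ⟨-, hp0⟩ := hB hp
        have h0 : (blowChart K n k p).1 0 = p.1 0 := by simp [blowChart]
        refine ⟨by simpa [h0] using hp0, ?_⟩
        have hpsi : ψ (blowChart K n k p) = p := by
          simp only [hψdef, blowChart]
          refine Prod.ext ?_ rfl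
          funext i
          by_cases hi : i = 0
          · simp [hi]
          · simp [hi, mul_div_cancel_left₀ _ hp0]
        simpa [hpsi] using hp
      · rintro ⟨hy0, hyB⟩
        refine ⟨ψ y, hyB, ?_⟩
        simp only [Set.mem_setOf_eq] at hy0
        simp only [hψdef, blowChart]
        refine Prod.ext ?_ rfl
        funext i
        by_cases hi : i = 0
        · simp [hi]
        · simp [hi, mul_div_cancel₀ _ hy0]
    have hopen : IsOpen (blowChart K n k '' B) := by
      rw [key]
      exact hψ.isOpen_inter_preimage hU hBopen
    exact hopen.preimage continuous_subtype_val
end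

section
/- Let K be a complete non-archimedean normed field and let a : (Fin n →₀ ℕ) → K be a family of coefficients tending to 0 along the cofinite filter. Let x ∈ K^n satisfy ‖x_j‖ ≤ 1 for all j, and write x^i = ∏_j x_j^{i(j)}. Then the family i ↦ a(i)·x^i is summable, the set T = {i : ‖a(i)‖ ≥ 1} is finite, and ‖∑'_i a(i)·x^i‖ < 1 if and only if ‖∑_{i ∈ T} a(i)·x^i‖ < 1. -/
/-!
Since `‖x j‖ ≤ 1`, the terms `a i * x^i` are dominated by `‖a i‖`, so they tend to `0` along
the cofinite filter; in a complete ultrametric group this gives summability. Off the finite set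
`T` all terms have norm `< 1`, and since they tend to `0` their norms stay below some `C < 1`,
hence so does the norm of the tail sum. The open unit ball is an additive subgroup, so adding the
tail does not change whether the norm is `< 1`.
-/

open Filter Topology

lemma norm_prod_pow_le_one {ι R : Type*} [NormedCommRing R] [NormOneClass R]
    (s : Finset ι) {x : ι → R} (hx : ∀ j, ‖x j‖ ≤ 1) (e : ι → ℕ) : ‖∏ j ∈ s, x j ^ e j‖ ≤ 1 :=
  (Finset.norm_prod_le _ _).trans <| Finset.prod_le_one (fun _ _ => norm_nonneg _)
    fun j _ => (norm_pow_le _ _).trans (pow_le_one₀ (norm_nonneg _) (hx j))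

lemma Filter.Tendsto.exists_lt_forall_le_of_cofinite {ι α : Type*} [LinearOrder α]
    [TopologicalSpace α] [OrderTopology α] [DenselyOrdered α] {f : ι → α} {c r : α}
    (hf : Tendsto f cofinite (𝓝 c)) (hc : c < r) (hfr : ∀ i, f i < r) :
    ∃ C < r, ∀ i, f i ≤ C := by
  classical
  obtain ⟨m, hcm, hmr⟩ := exists_between hc
  have hs : {i | m ≤ f i}.Finite := by
    simpa only [not_lt] using eventually_cofinite.1 (hf.eventually_lt_const hcm)
  let S := insert m (hs.toFinset.image f)
  refine ⟨S.max' (Finset.insert_nonempty _ _), ?_, fun i => ?_⟩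
  · simpa [S, Finset.max'_lt_iff, hmr] using fun i _ => hfr i
  · by_cases hi : m ≤ f i
    · exact S.le_max' _ (Finset.mem_insert_of_mem (Finset.mem_image_of_mem f (by simpa using hi)))
    · exact (not_le.1 hi).le.trans (S.le_max' _ (Finset.mem_insert_self _ _))

namespace IsUltrametricDist

variable {G : Type*} [SeminormedAddCommGroup G] [IsUltrametricDist G]

lemma norm_add_lt_iff_of_norm_lt_right {u v : G} {r : ℝ} (hv : ‖v‖ < r) :
    ‖u + v‖ < r ↔ ‖u‖ < r := by
  refine ⟨fun h => ?_, fun h => (norm_add_le_max u v).trans_lt (max_lt h hv)⟩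
  simpa using (norm_add_le_max (u + v) (-v)).trans_lt (max_lt h (by rwa [norm_neg]))

lemma norm_tsum_lt_of_forall_lt {ι : Type*} {f : ι → G} (hf : Tendsto f cofinite (𝓝 0))
    {r : ℝ} (hr : 0 < r) (h : ∀ i, ‖f i‖ < r) : ‖∑' i, f i‖ < r := by
  obtain ⟨C, hCr, hC⟩ :=
    (tendsto_zero_iff_norm_tendsto_zero.1 hf).exists_lt_forall_le_of_cofinite hr h
  exact (norm_tsum_le_of_forall_le_of_nonneg (le_max_right C 0)
    fun i => (hC i).trans (le_max_left C 0)).trans_lt (max_lt hCr hr)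

end IsUltrametricDist

/-- Let `K` be a complete non-archimedean normed field, `a` the coefficient family of a
strictly convergent power series (so `a i → 0` along the cofinite filter), and `x ∈ K^n` with
`‖x j‖ ≤ 1` for all `j`.  Then `i ↦ a i · x^i` is summable, `T = {i : ‖a i‖ ≥ 1}` is finite,
and `‖∑' i, a i · x^i‖ < 1` iff `‖∑ i ∈ T, a i · x^i‖ < 1`. -/
theorem tsum_norm_lt_one_iff_finite_part {K : Type*} [NormedField K] [CompleteSpace K]
    (hna : ∀ u v : K, ‖u + v‖ ≤ max ‖u‖ ‖v‖)
    {n : ℕ} (a : (Fin n →₀ ℕ) → K)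
    (ha : Filter.Tendsto a Filter.cofinite (nhds 0))
    (x : Fin n → K) (hx : ∀ j, ‖x j‖ ≤ 1) :
    Summable (fun i : Fin n →₀ ℕ => a i * ∏ j, x j ^ i j) ∧
    ∃ hT : {i : Fin n →₀ ℕ | 1 ≤ ‖a i‖}.Finite,
      (‖∑' i : Fin n →₀ ℕ, a i * ∏ j, x j ^ i j‖ < 1 ↔
        ‖∑ i ∈ hT.toFinset, a i * ∏ j, x j ^ i j‖ < 1) := by
  have := IsUltrametricDist.isUltrametricDist_of_isNonarchimedean_norm hna
  have ha' := tendsto_zero_iff_norm_tendsto_zero.1 ha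
  set f := fun i : Fin n →₀ ℕ => a i * ∏ j, x j ^ i j
  have hfa : ∀ i, ‖f i‖ ≤ ‖a i‖ := fun i =>
    (norm_mul_le _ _).trans (mul_le_of_le_one_right (norm_nonneg _) (norm_prod_pow_le_one _ hx i))
  have hf : Tendsto f cofinite (𝓝 0) := squeeze_zero_norm hfa ha'
  have hT : {i | 1 ≤ ‖a i‖}.Finite := by
    simpa only [not_lt] using eventually_cofinite.1 (ha'.eventually_lt_const zero_lt_one)
  have htail : ‖∑' i : {i // i ∉ hT.toFinset}, f i‖ < 1 :=
    IsUltrametricDist.norm_tsum_lt_of_forall_lt (hf.comp Subtype.val_injective.tendsto_cofinite)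
      one_pos fun i => (hfa i).trans_lt (by simpa using i.2)
  have hsum := NonarchimedeanAddGroup.summable_of_tendsto_cofinite_zero hf
  refine ⟨hsum, hT, ?_⟩
  rw [← hsum.sum_add_tsum_subtype_compl hT.toFinset]
  exact IsUltrametricDist.norm_add_lt_iff_of_norm_lt_right htail
end

section
/- Let K be a complete non-archimedean normed field, let a : (Fin n →₀ ℕ) → K tend to 0 along the cofinite filter, and let R^n = {x ∈ K^n : ‖x_j‖ ≤ 1 for all j} be the closed unit polydisc with the sup-norm subspace topology. Then the function F : R^n → K defined by F(x) = ∑'_i a(i)·x^i (where x^i = ∏_j x_j^{i(j)}) is continuous, and the sets {x ∈ R^n : ‖F(x)‖ ≤ 1} and {x ∈ R^n : ‖F(x)‖ < 1} are both closed and open (clopen) in R^n. -/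
/-- Let `K` be a complete non-archimedean normed field and `a` the coefficient family of a
strictly convergent power series in `n` variables.  Then `F(x) = ∑' i, a i · x^i` is a
continuous function on the closed unit polydisc `R^n`, and the subsets `{‖F‖ ≤ 1}` and
`{‖F‖ < 1}` of `R^n` are both clopen. -/
theorem strictly_convergent_clopen {K : Type*} [NormedField K] [CompleteSpace K]
    (hna : ∀ u v : K, ‖u + v‖ ≤ max ‖u‖ ‖v‖)
    {n : ℕ} (a : (Fin n →₀ ℕ) → K)
    (ha : Filter.Tendsto a Filter.cofinite (nhds 0))
    (F : {x : Fin n → K // ∀ j, ‖x j‖ ≤ 1} → K)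
    (hF : ∀ x, F x = ∑' i : Fin n →₀ ℕ, a i * ∏ j, (x : Fin n → K) j ^ i j) :
    Continuous F ∧
    (IsClosed {x | ‖F x‖ ≤ 1} ∧ IsOpen {x | ‖F x‖ ≤ 1}) ∧
    (IsClosed {x | ‖F x‖ < 1} ∧ IsOpen {x | ‖F x‖ < 1}) := by
  haveI hult : IsUltrametricDist K :=
    IsUltrametricDist.isUltrametricDist_of_forall_norm_add_le_max_norm hna
  -- basic norm bound on the terms
  have hbound : ∀ (x : {x : Fin n → K // ∀ j, ‖x j‖ ≤ 1}) (i : Fin n →₀ ℕ),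
      ‖a i * ∏ j, (x : Fin n → K) j ^ i j‖ ≤ ‖a i‖ := by
    intro x i
    rw [norm_mul]
    have h1 : ‖∏ j, (x : Fin n → K) j ^ i j‖ ≤ 1 := by
      rw [norm_prod]
      refine Finset.prod_le_one (fun j _ => by positivity) (fun j _ => ?_)
      rw [norm_pow]
      exact pow_le_one₀ (norm_nonneg _) (x.2 j)
    calc ‖a i‖ * ‖∏ j, (x : Fin n → K) j ^ i j‖ ≤ ‖a i‖ * 1 :=
          mul_le_mul_of_nonneg_left h1 (norm_nonneg _)
      _ = ‖a i‖ := mul_one _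
  -- summability of the term family for each x
  have hsum : ∀ (x : {x : Fin n → K // ∀ j, ‖x j‖ ≤ 1}),
      Summable (fun i : Fin n →₀ ℕ => a i * ∏ j, (x : Fin n → K) j ^ i j) := by
    intro x
    apply NonarchimedeanAddGroup.summable_of_tendsto_cofinite_zero
    rw [tendsto_zero_iff_norm_tendsto_zero]
    refine squeeze_zero (fun i => norm_nonneg _) (hbound x) ?_
    exact (tendsto_zero_iff_norm_tendsto_zero.mp ha)
  -- continuity of F
  have hcont : Continuous F := by
    rw [Metric.continuous_iff]
    intro x ε hε
    have hε2 : 0 < ε / 2 := by positivity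
    -- finitely many coefficients of norm ≥ ε/2
    have hfin : {i : Fin n →₀ ℕ | ¬ ‖a i‖ < ε / 2}.Finite := by
      have h := ha (Metric.ball_mem_nhds (0 : K) hε2)
      rw [Filter.mem_map, Filter.mem_cofinite] at h
      convert h using 1
      ext i
      simp [Metric.mem_ball, dist_zero_right]
    classical
    set S : Finset (Fin n →₀ ℕ) := hfin.toFinset with hSdef
    have hSmem : ∀ i, i ∉ S → ‖a i‖ < ε / 2 := by
      intro i hi
      by_contra h
      exact hi (hfin.mem_toFinset.mpr h)
    -- the polynomial part
    set g : {x : Fin n → K // ∀ j, ‖x j‖ ≤ 1} → K :=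
      fun y => ∑ i ∈ S, a i * ∏ j, (y : Fin n → K) j ^ i j with hgdef
    have hgc : Continuous g := by
      apply continuous_finset_sum
      intro i _
      exact continuous_const.mul (continuous_finset_prod _ (fun j _ =>
        ((continuous_apply j).comp continuous_subtype_val).pow _))
    obtain ⟨δ, hδ, hδ'⟩ := Metric.continuous_iff.mp hgc x (ε / 2) hε2
    refine ⟨δ, hδ, fun y hy => ?_⟩
    -- split F into polynomial part and tail
    have hsplit : ∀ z : {x : Fin n → K // ∀ j, ‖x j‖ ≤ 1},
        F z = g z + ∑' i : ↑((S : Set (Fin n →₀ ℕ)))ᶜ,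
          a (i : Fin n →₀ ℕ) * ∏ j, (z : Fin n → K) j ^ (i : Fin n →₀ ℕ) j := by
      intro z
      rw [hF z, ← Summable.sum_add_tsum_compl (s := S) (hsum z)]
    have htail : ∀ z : {x : Fin n → K // ∀ j, ‖x j‖ ≤ 1},
        ‖∑' i : ↑((S : Set (Fin n →₀ ℕ)))ᶜ,
          a (i : Fin n →₀ ℕ) * ∏ j, (z : Fin n → K) j ^ (i : Fin n →₀ ℕ) j‖ ≤ ε / 2 := by
      intro z
      refine IsUltrametricDist.norm_tsum_le_of_forall_le_of_nonneg (le_of_lt hε2) ?_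
      rintro ⟨i, hi⟩
      have : i ∉ S := by simpa using hi
      exact (hbound z i).trans (le_of_lt (hSmem i this))
    have hsub : ∀ u v : K, ‖u - v‖ ≤ max ‖u‖ ‖v‖ := by
      intro u v
      have := hna u (-v)
      simpa [sub_eq_add_neg] using this
    rw [dist_eq_norm, hsplit y, hsplit x]
    calc ‖(g y + ∑' i : ↑((S : Set (Fin n →₀ ℕ)))ᶜ,
            a (i : Fin n →₀ ℕ) * ∏ j, (y : Fin n → K) j ^ (i : Fin n →₀ ℕ) j) -
          (g x + ∑' i : ↑((S : Set (Fin n →₀ ℕ)))ᶜ,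
            a (i : Fin n →₀ ℕ) * ∏ j, (x : Fin n → K) j ^ (i : Fin n →₀ ℕ) j)‖
        = ‖(g y - g x) +
          ((∑' i : ↑((S : Set (Fin n →₀ ℕ)))ᶜ,
            a (i : Fin n →₀ ℕ) * ∏ j, (y : Fin n → K) j ^ (i : Fin n →₀ ℕ) j) -
           (∑' i : ↑((S : Set (Fin n →₀ ℕ)))ᶜ,
            a (i : Fin n →₀ ℕ) * ∏ j, (x : Fin n → K) j ^ (i : Fin n →₀ ℕ) j))‖ := by
          ring_nf
      _ ≤ max ‖g y - g x‖ ‖(∑' i : ↑((S : Set (Fin n →₀ ℕ)))ᶜ,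
            a (i : Fin n →₀ ℕ) * ∏ j, (y : Fin n → K) j ^ (i : Fin n →₀ ℕ) j) -
           (∑' i : ↑((S : Set (Fin n →₀ ℕ)))ᶜ,
            a (i : Fin n →₀ ℕ) * ∏ j, (x : Fin n → K) j ^ (i : Fin n →₀ ℕ) j)‖ :=
          hna _ _
      _ < ε := by
          apply max_lt
          · have h := hδ' y hy
            rw [dist_eq_norm] at h
            linarith
          · refine lt_of_le_of_lt ((hsub _ _).trans (max_le (htail y) (htail x))) ?_
            linarith
  refine ⟨hcont, ?_, ?_⟩
  · have h1 : {x | ‖F x‖ ≤ 1} = F ⁻¹' Metric.closedBall 0 1 := by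
      ext x; simp [Metric.mem_closedBall, dist_zero_right]
    have hcl : IsClopen (Metric.closedBall (0 : K) 1) :=
      IsUltrametricDist.isClopen_closedBall 0 one_ne_zero
    rw [h1]
    exact ⟨hcl.1.preimage hcont, hcl.2.preimage hcont⟩
  · have h1 : {x | ‖F x‖ < 1} = F ⁻¹' Metric.ball 0 1 := by
      ext x; simp [Metric.mem_ball, dist_zero_right]
    have hcl : IsClopen (Metric.ball (0 : K) 1) :=
      IsUltrametricDist.isClopen_ball 0 1
    rw [h1]
    exact ⟨hcl.1.preimage hcont, hcl.2.preimage hcont⟩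
end

section
/- Let X be a topological space, let K be a non-archimedean normed field, and let f, g : X → K be continuous functions. Then the set {x ∈ X : ‖f(x)‖ < ‖g(x)‖} is open in X, and the set {x ∈ X : ‖f(x)‖ < ‖g(x)‖} ∪ {x ∈ X : f(x) = 0 and g(x) = 0} is closed in X. -/
/-- Let `X` be a topological space, `K` a non-archimedean normed field, and `f, g : X → K`
continuous.  Then `{x : ‖f x‖ < ‖g x‖}` is open, and
`{x : ‖f x‖ < ‖g x‖} ∪ {x : f x = 0 ∧ g x = 0}` is closed. -/
theorem lt_set_isOpen_and_union_zero_isClosed {X K : Type*} [TopologicalSpace X]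
    [NormedField K] (hna : ∀ u v : K, ‖u + v‖ ≤ max ‖u‖ ‖v‖)
    (f g : X → K) (hf : Continuous f) (hg : Continuous g) :
    IsOpen {x : X | ‖f x‖ < ‖g x‖} ∧
    IsClosed ({x : X | ‖f x‖ < ‖g x‖} ∪ {x : X | f x = 0 ∧ g x = 0}) := by
  refine ⟨isOpen_lt hf.norm hg.norm, ?_⟩
  rw [← isOpen_compl_iff]
  have hset : ({x : X | ‖f x‖ < ‖g x‖} ∪ {x : X | f x = 0 ∧ g x = 0})ᶜ
      = {x : X | ‖g x‖ ≤ ‖f x‖ ∧ f x ≠ 0} := by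
    ext x
    simp only [Set.mem_compl_iff, Set.mem_union, Set.mem_setOf_eq, not_or, not_lt, not_and]
    constructor
    · rintro ⟨hle, h2⟩
      refine ⟨hle, fun hf0 => h2 hf0 ?_⟩
      have hg0 : ‖g x‖ ≤ 0 := by simpa [hf0] using hle
      simpa using le_antisymm hg0 (norm_nonneg _)
    · rintro ⟨hle, hne⟩
      exact ⟨hle, fun h0 => absurd h0 hne⟩
  rw [hset, isOpen_iff_mem_nhds]
  rintro x ⟨hle, hne⟩
  have hpos : 0 < ‖f x‖ := norm_pos_iff.mpr hne
  have h1 : ∀ᶠ y in nhds x, ‖f y - f x‖ < ‖f x‖ := by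
    have hc : Continuous fun y => ‖f y - f x‖ := (hf.sub continuous_const).norm
    have ht : Filter.Tendsto (fun y => ‖f y - f x‖) (nhds x) (nhds 0) := by
      simpa using hc.tendsto x
    exact ht.eventually_lt_const hpos
  have h2 : ∀ᶠ y in nhds x, ‖g y - g x‖ < ‖f x‖ := by
    have hc : Continuous fun y => ‖g y - g x‖ := (hg.sub continuous_const).norm
    have ht : Filter.Tendsto (fun y => ‖g y - g x‖) (nhds x) (nhds 0) := by
      simpa using hc.tendsto x
    exact ht.eventually_lt_const hpos
  filter_upwards [h1, h2] with y hy1 hy2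
  have hfx_le : ‖f x‖ ≤ ‖f y‖ := by
    have := hna (f y) (f x - f y)
    rw [add_sub_cancel] at this
    rcases le_max_iff.mp this with h | h
    · exact h
    · rw [norm_sub_rev] at h
      exact absurd (lt_of_le_of_lt h hy1) (lt_irrefl _)
  have hgy : ‖g y‖ ≤ ‖f x‖ := by
    have := hna (g x) (g y - g x)
    rw [add_sub_cancel] at this
    exact this.trans (max_le hle hy2.le)
  refine ⟨hgy.trans hfx_le, fun h0 => ?_⟩
  rw [h0, norm_zero] at hfx_le
  linarith
end
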